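/- arXiv:2503.11865 — 3 statements merged into one kernel-verified Lean document; each statement's English description precedes it below -/
import Mathlib

section
/- Let n ≥ 1, let U ⊆ ℝⁿ be open, and let L : U → (ℝⁿ →L[ℝ] ℝⁿ) be a smooth Nijenhuis operator whose characteristic polynomial is det(t·Id − L(p)) = tⁿ + σ₁(p)t^{n−1} + ⋯ + σₙ(p). Suppose L is differentially nondegenerate, i.e. the Jacobian matrix J(p) = (∂σᵢ/∂xⱼ(p)) is invertible for every p ∈ U. Then for every p ∈ U one has L(p) = J(p)⁻¹ · S_χ(p) · J(p), where S_χ(p) is the n×n matrix whose first column is (−σ₁(p), −σ₂(p), …, −σₙ(p))ᵀ, whose superdiagonal entries (S_χ)_{i,i+1} equal 1 for i = 1, …, n−1, and all of whose other entries are 0. -/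
open Matrix Set

noncomputable section

/-- Lie bracket of vector fields on ℝⁿ: `[X,Y](p) = DY(p)(X(p)) − DX(p)(Y(p))`. -/
def VBracketN {n : ℕ} (X Y : (Fin n → ℝ) → (Fin n → ℝ)) : (Fin n → ℝ) → (Fin n → ℝ) :=
  fun p => fderiv ℝ Y p (X p) - fderiv ℝ X p (Y p)

/-- `L` is a Nijenhuis operator on `U`: the Nijenhuis torsion vanishes on
constant vector fields at every point of `U`. -/
def IsNijenhuisOnN {n : ℕ} (L : (Fin n → ℝ) → ((Fin n → ℝ) →L[ℝ] (Fin n → ℝ)))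
    (U : Set (Fin n → ℝ)) : Prop :=
  ∀ u v : Fin n → ℝ, ∀ p ∈ U,
    VBracketN (fun q => L q u) (fun q => L q v) p
      - L p (VBracketN (fun q => L q u) (fun _ => v) p)
      - L p (VBracketN (fun _ => u) (fun q => L q v) p) = 0

/-- Matrix of the operator `L p` in the standard basis. -/
def opMatrixN {n : ℕ} (L : (Fin n → ℝ) → ((Fin n → ℝ) →L[ℝ] (Fin n → ℝ)))
    (p : Fin n → ℝ) : Matrix (Fin n) (Fin n) ℝ :=
  LinearMap.toMatrix' (↑(L p) : (Fin n → ℝ) →ₗ[ℝ] (Fin n → ℝ))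

/-- The functions `σ 0, …, σ (n−1)` (i.e. σ₁, …, σₙ) are the coefficients of the
characteristic polynomial of `L` on `U`:
`det (t·Id − L(p)) = tⁿ + σ₁(p) t^(n−1) + ⋯ + σₙ(p)`. -/
def CharCoeffsOnN {n : ℕ} (L : (Fin n → ℝ) → ((Fin n → ℝ) →L[ℝ] (Fin n → ℝ)))
    (U : Set (Fin n → ℝ)) (σ : Fin n → (Fin n → ℝ) → ℝ) : Prop :=
  ∀ p ∈ U, ∀ t : ℝ,
    (t • (1 : Matrix (Fin n) (Fin n) ℝ) - opMatrixN L p).det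
      = t ^ n + ∑ i : Fin n, σ i p * t ^ (n - 1 - (i : ℕ))

/-- Jacobian matrix `J(p) = (∂σᵢ/∂xⱼ (p))` of the map `Φ_L = (σ₁, …, σₙ)`. -/
def jacobiMatrix {n : ℕ} (σ : Fin n → (Fin n → ℝ) → ℝ) (p : Fin n → ℝ) :
    Matrix (Fin n) (Fin n) ℝ :=
  Matrix.of fun i j => fderiv ℝ (σ i) p (Pi.single j 1)

/-- The companion-type matrix `S_χ(p)`: first column `(−σ₁(p), …, −σₙ(p))ᵀ`,
superdiagonal entries `1`, all other entries `0`. -/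
def companionMatrix {n : ℕ} (σ : Fin n → (Fin n → ℝ) → ℝ) (p : Fin n → ℝ) :
    Matrix (Fin n) (Fin n) ℝ :=
  Matrix.of fun i j => if (j : ℕ) = 0 then -σ i p
    else if (j : ℕ) = (i : ℕ) + 1 then 1 else 0

namespace NijAux

variable {n : ℕ}

lemma single_eq_smul (j : Fin n) (r : ℝ) :
    (Pi.single j r : Fin n → ℝ) = r • (Pi.single j 1 : Fin n → ℝ) := by
  rw [← Pi.single_smul, smul_eq_mul, mul_one]

lemma lin_apply_eq_sum {M : Type*} [AddCommMonoid M] [Module ℝ M]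
    (φ : (Fin n → ℝ) →ₗ[ℝ] M) (w : Fin n → ℝ) :
    φ w = ∑ j, w j • φ (Pi.single j 1) := by
  conv_lhs => rw [← Finset.univ_sum_single w]
  rw [map_sum]
  refine Finset.sum_congr rfl fun j _ => ?_
  rw [single_eq_smul j (w j), LinearMap.map_smul]

lemma clm_apply_eq_sum (φ : (Fin n → ℝ) →L[ℝ] ℝ) (w : Fin n → ℝ) :
    φ w = ∑ j, w j * φ (Pi.single j 1) := by
  simpa [smul_eq_mul] using lin_apply_eq_sum (φ : (Fin n → ℝ) →ₗ[ℝ] ℝ) w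

/-- Determinant as a continuous multilinear map in the rows. -/
def detCM : ContinuousMultilinearMap ℝ (fun _ : Fin n => (Fin n → ℝ)) ℝ where
  toMultilinearMap := (Matrix.detRowAlternating (R := ℝ) (n := Fin n)).toMultilinearMap
  cont := by
    have h : (fun m : Fin n → Fin n → ℝ => (Matrix.of m).det)
        = fun m : Fin n → Fin n → ℝ =>
            ∑ σ : Equiv.Perm (Fin n), ((Equiv.Perm.sign σ : ℤ) : ℝ) * ∏ i, m (σ i) i := by
      funext m; rw [Matrix.det_apply']; rfl
    show Continuous fun m : Fin n → Fin n → ℝ => (Matrix.of m).det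
    rw [h]
    refine continuous_finset_sum _ fun σ _ => Continuous.mul continuous_const ?_
    exact continuous_finset_prod _ fun i _ =>
      (continuous_apply i).comp (continuous_apply (σ i))

@[simp] lemma detCM_apply (m : Fin n → Fin n → ℝ) : detCM m = (Matrix.of m).det := rfl

/-- Jacobi derivative CLM: `H ↦ trace (adjugate B * H)`. -/
def detD (B : Fin n → Fin n → ℝ) : (Fin n → Fin n → ℝ) →L[ℝ] ℝ :=
  LinearMap.toContinuousLinearMap
    { toFun := fun H => ((Matrix.of B).adjugate * Matrix.of H).trace
      map_add' := by
        intro x y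
        show ((Matrix.of B).adjugate * Matrix.of (x + y)).trace
          = ((Matrix.of B).adjugate * Matrix.of x).trace
            + ((Matrix.of B).adjugate * Matrix.of y).trace
        have h : Matrix.of (x + y) = Matrix.of x + Matrix.of y := rfl
        rw [h, Matrix.mul_add, Matrix.trace_add]
      map_smul' := by
        intro c x
        show ((Matrix.of B).adjugate * Matrix.of (c • x)).trace
          = c • ((Matrix.of B).adjugate * Matrix.of x).trace
        have h : Matrix.of (c • x) = c • Matrix.of x := rfl
        rw [h, Matrix.mul_smul, Matrix.trace_smul] }

@[simp] lemma detD_apply (B H : Fin n → Fin n → ℝ) :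
    detD B H = ((Matrix.of B).adjugate * Matrix.of H).trace := rfl

/-- Jacobi's formula. -/
theorem hasFDerivAt_det (B : Fin n → Fin n → ℝ) :
    HasFDerivAt (fun m : Fin n → Fin n → ℝ => (Matrix.of m).det) (detD B) B := by
  have h := (detCM (n := n)).hasFDerivAt B
  have heq : (detCM (n := n)).linearDeriv B = detD B := by
    apply ContinuousLinearMap.ext
    intro H
    rw [ContinuousMultilinearMap.linearDeriv_apply, detD_apply]
    have hrow : ∀ i : Fin n, detCM (Function.update B i (H i))
        = ∑ a, H i a * (Matrix.of B).adjugate a i := by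
      intro i
      have hHi : H i = ∑ a, ((H i a) • (Pi.single a 1 : Fin n → ℝ)) := by
        conv_lhs => rw [← Finset.univ_sum_single (H i)]
        exact Finset.sum_congr rfl fun a _ => single_eq_smul a (H i a)
      conv_lhs => rw [hHi]
      have hsum := (detCM (n := n)).toMultilinearMap.map_update_sum Finset.univ i
        (fun a => ((H i a) • (Pi.single a 1 : Fin n → ℝ))) B
      simp only [ContinuousMultilinearMap.coe_coe] at hsum
      rw [hsum]
      refine Finset.sum_congr rfl fun a _ => ?_
      have hsmul := (detCM (n := n)).toMultilinearMap.map_update_smul B i (H i a)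
        (Pi.single a 1 : Fin n → ℝ)
      simp only [ContinuousMultilinearMap.coe_coe] at hsmul
      rw [hsmul, smul_eq_mul]
      congr 1
      have h2 : (Matrix.of B).updateRow i (Pi.single a (1:ℝ))
          = Matrix.of (Function.update B i (Pi.single a 1 : Fin n → ℝ)) := rfl
      rw [Matrix.adjugate_apply, h2]
      rfl
    rw [Finset.sum_congr rfl fun i _ => hrow i]
    rw [Matrix.trace]
    rw [Finset.sum_comm]
    refine Finset.sum_congr rfl fun a _ => ?_
    rw [Matrix.diag]
    rw [Matrix.mul_apply]
    refine Finset.sum_congr rfl fun i _ => mul_comm _ _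
  rw [heq] at h
  exact h

/-- Evaluation of the characteristic polynomial. -/
theorem charpoly_eval (M : Matrix (Fin n) (Fin n) ℝ) (t : ℝ) :
    M.charpoly.eval t = (t • (1 : Matrix (Fin n) (Fin n) ℝ) - M).det := by
  have h : (Polynomial.evalRingHom t) M.charpoly
      = (((Polynomial.evalRingHom t).mapMatrix) M.charmatrix).det := by
    rw [Matrix.charpoly, RingHom.map_det]
  have h2 : ((Polynomial.evalRingHom t).mapMatrix) M.charmatrix
      = t • (1 : Matrix (Fin n) (Fin n) ℝ) - M := by
    ext i j
    simp only [RingHom.mapMatrix_apply, Matrix.map_apply, Matrix.charmatrix_apply,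
      Matrix.sub_apply, Matrix.smul_apply, Matrix.one_apply, Matrix.diagonal_apply]
    by_cases hij : i = j <;>
      simp [hij, smul_eq_mul]
  rw [← h2, ← h]; rfl

lemma sum4a (f : Fin n → Fin n → Fin n → Fin n → ℝ) :
    ∑ i, ∑ a, ∑ j, ∑ b, f i a j b = ∑ b, ∑ j, ∑ a, ∑ i, f i a j b := by
  calc ∑ i, ∑ a, ∑ j, ∑ b, f i a j b
      = ∑ a, ∑ i, ∑ j, ∑ b, f i a j b := Finset.sum_comm
    _ = ∑ a, ∑ j, ∑ i, ∑ b, f i a j b := Finset.sum_congr rfl fun a _ => Finset.sum_comm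
    _ = ∑ j, ∑ a, ∑ i, ∑ b, f i a j b := Finset.sum_comm
    _ = ∑ j, ∑ a, ∑ b, ∑ i, f i a j b :=
        Finset.sum_congr rfl fun j _ => Finset.sum_congr rfl fun a _ => Finset.sum_comm
    _ = ∑ j, ∑ b, ∑ a, ∑ i, f i a j b := Finset.sum_congr rfl fun j _ => Finset.sum_comm
    _ = ∑ b, ∑ j, ∑ a, ∑ i, f i a j b := Finset.sum_comm

lemma sum4b (f : Fin n → Fin n → Fin n → Fin n → ℝ) :
    ∑ i, ∑ a, ∑ j, ∑ b, f i a j b = ∑ j, ∑ i, ∑ b, ∑ a, f i a j b := by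
  calc ∑ i, ∑ a, ∑ j, ∑ b, f i a j b
      = ∑ i, ∑ j, ∑ a, ∑ b, f i a j b := Finset.sum_congr rfl fun i _ => Finset.sum_comm
    _ = ∑ j, ∑ i, ∑ a, ∑ b, f i a j b := Finset.sum_comm
    _ = ∑ j, ∑ i, ∑ b, ∑ a, f i a j b :=
        Finset.sum_congr rfl fun j _ => Finset.sum_congr rfl fun i _ => Finset.sum_comm

/-- Key algebraic lemma: traces of powers against the Nijenhuis tensor vanish. -/
theorem trace_pow_nij (A : Matrix (Fin n) (Fin n) ℝ)
    (D : (Fin n → ℝ) →ₗ[ℝ] Matrix (Fin n) (Fin n) ℝ)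
    (hsym : ∀ u v : Fin n → ℝ,
      (D (A *ᵥ u) - A * D u) *ᵥ v = (D (A *ᵥ v) - A * D v) *ᵥ u)
    (k : ℕ) (u : Fin n → ℝ) :
    (A ^ k * (D (A *ᵥ u) - A * D u)).trace = 0 := by
  classical
  set E : Fin n → Matrix (Fin n) (Fin n) ℝ := fun b => D (Pi.single b 1) with hE
  have hMentry : ∀ (a i : Fin n),
      (D (A *ᵥ u) - A * D u) a i
        = ∑ j, ((D (A *ᵥ Pi.single i 1) - A * D (Pi.single i 1)) a j) * u j := by
    intro a i
    have h1 : (D (A *ᵥ u) - A * D u) a i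
        = ((D (A *ᵥ u) - A * D u) *ᵥ Pi.single i 1) a := by
      rw [Matrix.mulVec_single]; simp
    rw [h1, hsym u (Pi.single i 1)]
    rfl
  have hTentry : ∀ (a i j : Fin n),
      (D (A *ᵥ Pi.single i 1) - A * D (Pi.single i 1)) a j
        = (∑ b, A b i * (E b) a j) - (∑ b, A a b * (E i) b j) := by
    intro a i j
    have hcol : D (A *ᵥ Pi.single i 1) = ∑ b, A b i • E b := by
      rw [lin_apply_eq_sum D (A *ᵥ Pi.single i 1)]
      refine Finset.sum_congr rfl fun b _ => ?_
      simp [hE, Matrix.mulVec_single]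
    have e1 : (D (A *ᵥ Pi.single i 1)) a j = ∑ b, A b i * (E b) a j := by
      rw [hcol, Matrix.sum_apply]
      refine Finset.sum_congr rfl fun b _ => ?_
      rw [Matrix.smul_apply, smul_eq_mul]
    have e2 : (A * D (Pi.single i 1)) a j = ∑ b, A a b * (E i) b j := by
      rw [Matrix.mul_apply]
    rw [Matrix.sub_apply, e1, e2]
  have main : (A ^ k * (D (A *ᵥ u) - A * D u)).trace
      = (∑ i, ∑ a, ∑ j, ∑ b, (A ^ k) i a * (A b i * (E b) a j * u j))
        - (∑ i, ∑ a, ∑ j, ∑ b, (A ^ k) i a * (A a b * (E i) b j * u j)) := by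
    rw [← Finset.sum_sub_distrib, Matrix.trace]
    refine Finset.sum_congr rfl fun i _ => ?_
    rw [Matrix.diag_apply, Matrix.mul_apply, ← Finset.sum_sub_distrib]
    refine Finset.sum_congr rfl fun a _ => ?_
    rw [hMentry a i, Finset.mul_sum, ← Finset.sum_sub_distrib]
    refine Finset.sum_congr rfl fun j _ => ?_
    rw [hTentry a i j, sub_mul, mul_sub, Finset.sum_mul, Finset.sum_mul,
      Finset.mul_sum, Finset.mul_sum]
  rw [main, sub_eq_zero]
  have h1 : ∀ (b j : Fin n), (∑ a, ∑ i, (A ^ k) i a * (A b i * (E b) a j * u j))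
      = (A ^ (k+1) * E b) b j * u j := by
    intro b j
    have inner : ∀ a, (∑ i, (A ^ k) i a * (A b i * (E b) a j * u j))
        = (A ^ (k+1)) b a * ((E b) a j * u j) := by
      intro a
      rw [pow_succ' (M := Matrix (Fin n) (Fin n) ℝ) A k, Matrix.mul_apply, Finset.sum_mul]
      exact Finset.sum_congr rfl fun i _ => by ring
    rw [Finset.sum_congr rfl fun a _ => inner a, Matrix.mul_apply, Finset.sum_mul]
    exact Finset.sum_congr rfl fun a _ => by ring
  have h2 : ∀ (j i : Fin n), (∑ b, ∑ a, (A ^ k) i a * (A a b * (E i) b j * u j))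
      = (A ^ (k+1) * E i) i j * u j := by
    intro j i
    have inner : ∀ b, (∑ a, (A ^ k) i a * (A a b * (E i) b j * u j))
        = (A ^ (k+1)) i b * ((E i) b j * u j) := by
      intro b
      rw [pow_succ (M := Matrix (Fin n) (Fin n) ℝ) A k, Matrix.mul_apply, Finset.sum_mul]
      exact Finset.sum_congr rfl fun a _ => by ring
    rw [Finset.sum_congr rfl fun b _ => inner b, Matrix.mul_apply, Finset.sum_mul]
    exact Finset.sum_congr rfl fun b _ => by ring
  calc ∑ i, ∑ a, ∑ j, ∑ b, (A ^ k) i a * (A b i * (E b) a j * u j)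
      = ∑ b, ∑ j, ∑ a, ∑ i, (A ^ k) i a * (A b i * (E b) a j * u j) := sum4a _
    _ = ∑ b, ∑ j, (A ^ (k+1) * E b) b j * u j :=
        Finset.sum_congr rfl fun b _ => Finset.sum_congr rfl fun j _ => h1 b j
    _ = ∑ j, ∑ i, (A ^ (k+1) * E i) i j * u j := Finset.sum_comm
    _ = ∑ j, ∑ i, ∑ b, ∑ a, (A ^ k) i a * (A a b * (E i) b j * u j) :=
        Finset.sum_congr rfl fun j _ => Finset.sum_congr rfl fun i _ => (h2 j i).symm
    _ = ∑ i, ∑ a, ∑ j, ∑ b, (A ^ k) i a * (A a b * (E i) b j * u j) := (sum4b _).symm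

/-- Entries of an operator, as a linear map into the pi type. -/
def opEntries : ((Fin n → ℝ) →L[ℝ] (Fin n → ℝ)) →ₗ[ℝ] (Fin n → Fin n → ℝ) where
  toFun T := fun i j => T (Pi.single j 1) i
  map_add' S T := by funext i j; simp
  map_smul' c T := by funext i j; simp

lemma of_opEntries (T : (Fin n → ℝ) →L[ℝ] (Fin n → ℝ)) :
    Matrix.of (opEntries T) = LinearMap.toMatrix' (T : (Fin n → ℝ) →ₗ[ℝ] (Fin n → ℝ)) := by
  ext i j
  rw [LinearMap.toMatrix'_apply]
  show T (Pi.single j 1) i = T (Pi.single j 1) i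
  have h : (Pi.single j 1 : Fin n → ℝ) = fun j' => if j' = j then 1 else 0 := by
    funext j'; simp [Pi.single_apply]
  rw [h]

lemma of_opEntries_mulVec (T : (Fin n → ℝ) →L[ℝ] (Fin n → ℝ)) (x : Fin n → ℝ) :
    Matrix.of (opEntries T) *ᵥ x = T x := by
  rw [of_opEntries]
  calc LinearMap.toMatrix' (T : (Fin n → ℝ) →ₗ[ℝ] (Fin n → ℝ)) *ᵥ x
      = Matrix.toLin' (LinearMap.toMatrix' (T : (Fin n → ℝ) →ₗ[ℝ] (Fin n → ℝ))) x :=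
        (Matrix.toLin'_apply _ _).symm
    _ = T x := by rw [Matrix.toLin'_toMatrix']; rfl

/-- Continuous version. -/
def opEntriesL : ((Fin n → ℝ) →L[ℝ] (Fin n → ℝ)) →L[ℝ] (Fin n → Fin n → ℝ) :=
  LinearMap.toContinuousLinearMap opEntries

@[simp] lemma opEntriesL_apply (T : (Fin n → ℝ) →L[ℝ] (Fin n → ℝ)) :
    opEntriesL (n := n) T = opEntries T := rfl

/-- Coefficients of a sum of monomials. -/
lemma coeff_sum_pow (a : Fin n → ℝ) (e : Fin n → ℕ) (k : ℕ) :
    (∑ i, Polynomial.C (a i) * Polynomial.X ^ (e i)).coeff k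
      = ∑ i, if k = e i then a i else 0 := by
  rw [Polynomial.finset_sum_coeff]
  refine Finset.sum_congr rfl fun i _ => ?_
  rw [Polynomial.coeff_C_mul, Polynomial.coeff_X_pow]
  by_cases h : k = e i <;> simp [h]

lemma eval_sum_pow (a : Fin n → ℝ) (e : Fin n → ℕ) (t : ℝ) :
    (∑ i, Polynomial.C (a i) * Polynomial.X ^ (e i)).eval t = ∑ i, a i * t ^ (e i) := by
  rw [Polynomial.eval_finset_sum]
  simp

end NijAux

set_option maxHeartbeats 1600000 in
/-- **Theorem (canonical form of differentially nondegenerate Nijenhuis operators).**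
If `L` is a smooth Nijenhuis operator on an open `U ⊆ ℝⁿ` whose Jacobian matrix
`J(p)` of the characteristic coefficients is invertible at every point, then
`L(p) = J(p)⁻¹ · S_χ(p) · J(p)` for every `p ∈ U`. -/
theorem canonical_form_of_diff_nondegenerate
    (n : ℕ) (hn : 1 ≤ n) (U : Set (Fin n → ℝ)) (hU : IsOpen U)
    (L : (Fin n → ℝ) → ((Fin n → ℝ) →L[ℝ] (Fin n → ℝ)))
    (hLsmooth : ContDiffOn ℝ (⊤ : ℕ∞) L U)
    (hNij : IsNijenhuisOnN L U)
    (σ : Fin n → (Fin n → ℝ) → ℝ)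
    (hσ : CharCoeffsOnN L U σ)
    (hJ : ∀ p ∈ U, IsUnit (jacobiMatrix σ p)) :
    ∀ p ∈ U, opMatrixN L p = (jacobiMatrix σ p)⁻¹ * companionMatrix σ p * jacobiMatrix σ p := by
  intro p hp
  classical
  haveI : NeZero n := ⟨by omega⟩
  set i0 : Fin n := ⟨0, by omega⟩ with hi0
  have hnhds : U ∈ nhds p := hU.mem_nhds hp
  have hLd : DifferentiableAt ℝ L p := (hLsmooth.contDiffAt hnhds).differentiableAt (by simp)
  set A : Matrix (Fin n) (Fin n) ℝ := opMatrixN L p with hA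
  set DL : (Fin n → ℝ) →L[ℝ] ((Fin n → ℝ) →L[ℝ] (Fin n → ℝ)) := fderiv ℝ L p with hDLdef
  set DD : (Fin n → ℝ) →L[ℝ] (Fin n → Fin n → ℝ) := NijAux.opEntriesL.comp DL with hDDdef
  set Dmat : (Fin n → ℝ) →ₗ[ℝ] Matrix (Fin n) (Fin n) ℝ :=
    { toFun := fun w => Matrix.of (DD w)
      map_add' := fun x y => by
        show Matrix.of (DD (x + y)) = Matrix.of (DD x) + Matrix.of (DD y)
        rw [map_add]; rfl
      map_smul' := fun c x => by
        show Matrix.of (DD (c • x)) = c • Matrix.of (DD x)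
        rw [_root_.map_smul]; rfl } with hDmatdef
  have hDmat_mulVec : ∀ w x, Dmat w *ᵥ x = (DL w) x := fun w x =>
    NijAux.of_opEntries_mulVec (DL w) x
  have hA_of : A = Matrix.of (NijAux.opEntries (L p)) := (NijAux.of_opEntries (L p)).symm
  have hA_mulVec : ∀ x, A *ᵥ x = L p x := by
    intro x; rw [hA_of]; exact NijAux.of_opEntries_mulVec (L p) x
  -- fderiv of q ↦ L q w
  have hLw : ∀ w : Fin n → ℝ, fderiv ℝ (fun q => L q w) p
      = ((ContinuousLinearMap.apply ℝ (Fin n → ℝ) w).comp DL) := by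
    intro w
    exact (((ContinuousLinearMap.apply ℝ (Fin n → ℝ) w).hasFDerivAt).comp p
      hLd.hasFDerivAt).fderiv
  -- operator symmetry from the Nijenhuis condition
  have hop : ∀ u v : Fin n → ℝ,
      (DL (L p u)) v - L p ((DL u) v) = (DL (L p v)) u - L p ((DL v) u) := by
    intro u v
    have h := hNij u v p hp
    simp only [VBracketN, hLw, fderiv_const, fderiv_const_apply, Pi.zero_apply,
      ContinuousLinearMap.comp_apply, ContinuousLinearMap.apply_apply,
      ContinuousLinearMap.zero_apply, zero_sub, sub_zero, map_sub, map_neg] at h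
    funext z
    have hz := congrFun h z
    simp only [Pi.sub_apply, Pi.neg_apply, Pi.zero_apply] at hz ⊢
    linarith
  -- matrix symmetry
  have hsym : ∀ u v : Fin n → ℝ,
      (Dmat (A *ᵥ u) - A * Dmat u) *ᵥ v = (Dmat (A *ᵥ v) - A * Dmat v) *ᵥ u := by
    intro u v
    rw [Matrix.sub_mulVec, Matrix.sub_mulVec, ← Matrix.mulVec_mulVec, ← Matrix.mulVec_mulVec,
      hDmat_mulVec, hDmat_mulVec, hA_mulVec, hA_mulVec, hA_mulVec, hA_mulVec,
      hDmat_mulVec, hDmat_mulVec]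
    exact hop u v
  have htrace : ∀ (k : ℕ) (x : Fin n → ℝ),
      (A ^ k * (Dmat (A *ᵥ x) - A * Dmat x)).trace = 0 :=
    fun k x => NijAux.trace_pow_nij A Dmat hsym k x
  -- the determinant functions
  set Cm : ℝ → (Fin n → Fin n → ℝ) := fun t => fun i j => if i = j then t else 0 with hCmdef
  set Fm : ℝ → (Fin n → ℝ) → (Fin n → Fin n → ℝ) :=
    fun t q => Cm t - NijAux.opEntriesL (L q) with hFmdef
  have hofF : ∀ (t : ℝ) (q : Fin n → ℝ),
      Matrix.of (Fm t q) = t • (1 : Matrix (Fin n) (Fin n) ℝ) - opMatrixN L q := by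
    intro t q
    ext i j
    show Cm t i j - NijAux.opEntries (L q) i j = _
    rw [Matrix.sub_apply, Matrix.smul_apply, Matrix.one_apply]
    have h1 : opMatrixN L q i j = NijAux.opEntries (L q) i j := by
      rw [opMatrixN, ← NijAux.of_opEntries]; rfl
    rw [h1, hCmdef]
    by_cases hij : i = j <;> simp [hij]
  set g : ℝ → (Fin n → ℝ) → ℝ := fun t q => (Matrix.of (Fm t q)).det with hgdef
  have hgU : ∀ (t : ℝ), ∀ q ∈ U, g t q = t^n + ∑ i : Fin n, σ i q * t ^ (n - 1 - (i:ℕ)) := by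
    intro t q hq
    show (Matrix.of (Fm t q)).det = _
    rw [hofF t q]
    exact hσ q hq t
  have hgd : ∀ t : ℝ, HasFDerivAt (g t) ((NijAux.detD (Fm t p)).comp (-DD)) p := by
    intro t
    have h1 : HasFDerivAt (fun q => NijAux.opEntriesL (n := n) (L q)) DD p :=
      (NijAux.opEntriesL.hasFDerivAt).comp p hLd.hasFDerivAt
    have h2 : HasFDerivAt (Fm t) (-DD) p := h1.const_sub (Cm t)
    exact (NijAux.hasFDerivAt_det (Fm t p)).comp p h2
  -- σ is differentiable at p
  have hσd : ∀ i : Fin n, DifferentiableAt ℝ (σ i) p := by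
    intro i
    set v : Fin (n+1) → ℝ := fun s => ((s : ℕ) : ℝ) with hv
    have hinj : Set.InjOn v ((Finset.univ : Finset (Fin (n+1))) : Set (Fin (n+1))) := by
      intro a _ b _ hab
      exact Fin.ext (Nat.cast_injective hab)
    set w : Fin (n+1) → ℝ :=
      fun s => (Lagrange.basis Finset.univ v s).coeff (n - 1 - (i:ℕ)) with hw
    have hrep : ∀ q ∈ U, σ i q = ∑ s, g (v s) q * w s := by
      intro q hq
      set Pq : Polynomial ℝ := Polynomial.X ^ n
        + ∑ k : Fin n, Polynomial.C (σ k q) * Polynomial.X ^ (n - 1 - (k:ℕ)) with hPq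
      have hdeg : Pq.degree < ((Finset.univ : Finset (Fin (n+1))).card : ℕ) := by
        rw [Finset.card_univ, Fintype.card_fin]
        have h1 : Pq.degree ≤ (n : ℕ) := by
          rw [hPq]
          refine le_trans (Polynomial.degree_add_le _ _) (max_le ?_ ?_)
          · exact Polynomial.degree_X_pow_le n
          · refine le_trans (Polynomial.degree_sum_le _ _) ?_
            refine Finset.sup_le fun k _ => ?_
            refine le_trans (Polynomial.degree_C_mul_X_pow_le _ _) ?_
            exact_mod_cast (show (n:ℕ)-1-((k:ℕ)) ≤ n by omega)
        refine lt_of_le_of_lt h1 ?_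
        exact_mod_cast Nat.lt_succ_self n
      have heval : ∀ t : ℝ, Pq.eval t = g t q := by
        intro t
        rw [hPq, Polynomial.eval_add, Polynomial.eval_pow, Polynomial.eval_X,
          NijAux.eval_sum_pow, hgU t q hq]
      have hint := Lagrange.eq_interpolate (f := Pq) hinj hdeg
      have hcoeff : σ i q = Pq.coeff (n - 1 - (i:ℕ)) := by
        rw [hPq, Polynomial.coeff_add, Polynomial.coeff_X_pow, NijAux.coeff_sum_pow]
        have hne : ¬ (n - 1 - (i:ℕ) = n) := by have := i.isLt; omega
        rw [if_neg hne, zero_add]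
        rw [Finset.sum_eq_single i]
        · simp
        · intro k _ hki
          have : ¬ (n - 1 - (i:ℕ) = n - 1 - (k:ℕ)) := by
            have h1 := i.isLt; have h2 := k.isLt
            have h3 : (i:ℕ) ≠ (k:ℕ) := fun hc => hki (Fin.ext hc.symm)
            omega
          rw [if_neg this]
        · intro hni; exact absurd (Finset.mem_univ i) hni
      have hicoeff : Pq.coeff (n - 1 - (i:ℕ)) = ∑ s, g (v s) q * w s := by
        conv_lhs => rw [hint]
        rw [Lagrange.interpolate_apply, Polynomial.finset_sum_coeff]
        refine Finset.sum_congr rfl fun s _ => ?_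
        rw [Polynomial.coeff_C_mul, heval (v s)]
      rw [hcoeff, hicoeff]
    have hGd : HasFDerivAt (fun q => ∑ s, g (v s) q * w s)
        (∑ s, w s • ((NijAux.detD (Fm (v s) p)).comp (-DD))) p :=
      HasFDerivAt.fun_sum fun s _ => (hgd (v s)).mul_const (w s)
    have hfin : HasFDerivAt (σ i)
        (∑ s, w s • ((NijAux.detD (Fm (v s) p)).comp (-DD))) p :=
      hGd.congr_of_eventuallyEq
        (Filter.eventuallyEq_of_mem hnhds fun q hq => hrep q hq)
    exact hfin.differentiableAt
  set dσ : Fin n → ((Fin n → ℝ) →L[ℝ] ℝ) := fun i => fderiv ℝ (σ i) p with hdσdef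
  have hdσ : ∀ i, HasFDerivAt (σ i) (dσ i) p := fun i => (hσd i).hasFDerivAt
  -- derivative of g t, expressed through dσ
  have hkey2 : ∀ t : ℝ, ((NijAux.detD (Fm t p)).comp (-DD))
      = ∑ i : Fin n, (t ^ (n-1-(i:ℕ))) • dσ i := by
    intro t
    have h2 : HasFDerivAt (fun q => t^n + ∑ i : Fin n, σ i q * t ^ (n-1-(i:ℕ)))
        (∑ i : Fin n, (t ^ (n-1-(i:ℕ))) • dσ i) p :=
      (HasFDerivAt.fun_sum fun i _ => (hdσ i).mul_const _).const_add (t^n)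
    have h3 : HasFDerivAt (g t) (∑ i : Fin n, (t ^ (n-1-(i:ℕ))) • dσ i) p :=
      h2.congr_of_eventuallyEq
        (Filter.eventuallyEq_of_mem hnhds fun q hq => hgU t q hq)
    exact (hgd t).unique h3
  have hkey2' : ∀ (t : ℝ) (x : Fin n → ℝ),
      -(((Matrix.of (Fm t p)).adjugate * Dmat x).trace)
        = ∑ i : Fin n, dσ i x * t ^ (n-1-(i:ℕ)) := by
    intro t x
    have h := congrArg (fun (φ : (Fin n → ℝ) →L[ℝ] ℝ) => φ x) (hkey2 t)
    simp only [ContinuousLinearMap.comp_apply, ContinuousLinearMap.neg_apply,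
      ContinuousLinearMap.sum_apply, ContinuousLinearMap.smul_apply, smul_eq_mul] at h
    rw [NijAux.detD_apply] at h
    have hofneg : Matrix.of (-(DD x)) = -(Dmat x) := rfl
    rw [hofneg, Matrix.mul_neg, Matrix.trace_neg] at h
    rw [h]
    exact Finset.sum_congr rfl fun i _ => mul_comm _ _
  -- characteristic polynomial facts
  set χ : Polynomial ℝ := A.charpoly with hχdef
  have hχeval : ∀ t : ℝ, χ.eval t = (Matrix.of (Fm t p)).det := by
    intro t
    rw [hχdef, NijAux.charpoly_eval, hofF t p]
  have hχne : χ ≠ 0 := (Matrix.charpoly_monic A).ne_zero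
  have hGinf : {t : ℝ | χ.eval t ≠ 0}.Infinite := by
    have h1 := (Polynomial.finite_setOf_isRoot hχne).infinite_compl
    have h2 : {x : ℝ | Polynomial.IsRoot χ x}ᶜ = {t : ℝ | χ.eval t ≠ 0} := by
      ext t; simp [Polynomial.IsRoot]
    rwa [h2] at h1
  -- the key trace recursion for good t
  have hkey4 : ∀ t : ℝ, χ.eval t ≠ 0 → ∀ x : Fin n → ℝ,
      ((Matrix.of (Fm t p)).adjugate * Dmat (A *ᵥ x)).trace
        = t * ((Matrix.of (Fm t p)).adjugate * Dmat x).trace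
          - χ.eval t * (Dmat x).trace := by
    intro t ht x
    set Bt : Matrix (Fin n) (Fin n) ℝ := Matrix.of (Fm t p) with hBtdef
    have hBtA : Bt = t • (1 : Matrix (Fin n) (Fin n) ℝ) - A := hofF t p
    have hdetBt : Bt.det = χ.eval t := (hχeval t).symm
    have hu : IsUnit Bt.det := by rw [hdetBt]; exact isUnit_iff_ne_zero.mpr ht
    haveI := Bt.invertibleOfIsUnitDet hu
    obtain ⟨ψ, hψ⟩ := Polynomial.X_sub_C_dvd_sub_C_eval (a := t) (p := χ)
    have hψA : Bt * (Polynomial.aeval A ψ) = (χ.eval t) • (1 : Matrix (Fin n) (Fin n) ℝ) := by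
      have h1 := congrArg (Polynomial.aeval A) hψ
      rw [_root_.map_sub, hχdef, Matrix.aeval_self_charpoly, _root_.map_mul, _root_.map_sub, Polynomial.aeval_X,
        Polynomial.aeval_C, Polynomial.aeval_C, zero_sub,
        Algebra.algebraMap_eq_smul_one, Algebra.algebraMap_eq_smul_one] at h1
      have h2 : Bt = -(A - t • (1 : Matrix (Fin n) (Fin n) ℝ)) := by rw [hBtA, neg_sub]
      rw [h2, neg_mul, ← h1, neg_neg]
    have hAψ : (Polynomial.aeval A ψ) * Bt = (χ.eval t) • (1 : Matrix (Fin n) (Fin n) ℝ) := by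
      have e1 : A - t • (1 : Matrix (Fin n) (Fin n) ℝ)
          = Polynomial.aeval A (Polynomial.X - Polynomial.C t) := by
        rw [_root_.map_sub, Polynomial.aeval_X, Polynomial.aeval_C,
          Algebra.algebraMap_eq_smul_one]
      have hc : (Polynomial.aeval A ψ) * (A - t • (1 : Matrix (Fin n) (Fin n) ℝ))
          = (A - t • (1 : Matrix (Fin n) (Fin n) ℝ)) * (Polynomial.aeval A ψ) := by
        rw [e1, ← _root_.map_mul, ← _root_.map_mul, mul_comm ψ]
      have h2 : Bt = -(A - t • (1 : Matrix (Fin n) (Fin n) ℝ)) := by rw [hBtA, neg_sub]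
      rw [h2, mul_neg, hc, ← neg_mul, ← h2, hψA]
    have hadj : Bt.adjugate = Polynomial.aeval A ψ := by
      have h1 : Bt * Bt.adjugate = Bt * Polynomial.aeval A ψ := by
        rw [Matrix.mul_adjugate, hdetBt, hψA]
      calc Bt.adjugate = ⅟Bt * (Bt * Bt.adjugate) := (invOf_mul_cancel_left _ _).symm
        _ = ⅟Bt * (Bt * Polynomial.aeval A ψ) := by rw [h1]
        _ = Polynomial.aeval A ψ := invOf_mul_cancel_left _ _
    have htr0 : (Bt.adjugate * (Dmat (A *ᵥ x) - A * Dmat x)).trace = 0 := by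
      rw [hadj, Polynomial.aeval_eq_sum_range, Finset.sum_mul, Matrix.trace_sum]
      refine Finset.sum_eq_zero fun k _ => ?_
      rw [smul_mul_assoc, Matrix.trace_smul, htrace k x, smul_zero]
    have hsplit : Bt.adjugate * Dmat (A *ᵥ x)
        = Bt.adjugate * (Dmat (A *ᵥ x) - A * Dmat x) + Bt.adjugate * (A * Dmat x) := by
      rw [← Matrix.mul_add]
      congr 1
      abel
    have hadjA : Bt.adjugate * A
        = t • Bt.adjugate - (χ.eval t) • (1 : Matrix (Fin n) (Fin n) ℝ) := by
      have h1 := Matrix.adjugate_mul Bt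
      rw [hdetBt] at h1
      nth_rewrite 2 [hBtA] at h1
      rw [Matrix.mul_sub] at h1
      have h2 : Bt.adjugate * (t • (1 : Matrix (Fin n) (Fin n) ℝ)) = t • Bt.adjugate := by
        rw [Matrix.mul_smul, Matrix.mul_one]
      rw [h2] at h1
      have h3 := sub_sub_cancel (t • Bt.adjugate) (Bt.adjugate * A)
      rw [h1] at h3
      exact h3.symm
    calc (Bt.adjugate * Dmat (A *ᵥ x)).trace
        = (Bt.adjugate * (Dmat (A *ᵥ x) - A * Dmat x)).trace
          + (Bt.adjugate * (A * Dmat x)).trace := by rw [hsplit, Matrix.trace_add]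
      _ = ((Bt.adjugate * A) * Dmat x).trace := by rw [htr0, zero_add, Matrix.mul_assoc]
      _ = t * (Bt.adjugate * Dmat x).trace - χ.eval t * (Dmat x).trace := by
          rw [hadjA, Matrix.sub_mul, Matrix.trace_sub, Matrix.smul_mul, Matrix.trace_smul,
            Matrix.smul_mul, Matrix.trace_smul, Matrix.one_mul, smul_eq_mul, smul_eq_mul]
  -- row identities
  have hrowid : ∀ (x : Fin n → ℝ) (i : Fin n),
      dσ i (A *ᵥ x) = (if h : (i:ℕ)+1 < n then dσ ⟨(i:ℕ)+1, h⟩ x else 0)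
        - σ i p * dσ i0 x := by
    intro x
    set τ : ℝ := (Dmat x).trace with hτdef
    set P : Polynomial ℝ :=
      ∑ i : Fin n, Polynomial.C (dσ i (A *ᵥ x)) * Polynomial.X ^ (n-1-(i:ℕ)) with hPdef
    set Q : Polynomial ℝ :=
      (∑ i : Fin n, Polynomial.C (dσ i x) * Polynomial.X ^ (n-(i:ℕ)))
        + Polynomial.C τ * (Polynomial.X ^ n
          + ∑ i : Fin n, Polynomial.C (σ i p) * Polynomial.X ^ (n-1-(i:ℕ))) with hQdef
    have hPQeval : ∀ t : ℝ, χ.eval t ≠ 0 → P.eval t = Q.eval t := by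
      intro t ht
      have e1 : P.eval t = ∑ i : Fin n, dσ i (A *ᵥ x) * t ^ (n-1-(i:ℕ)) :=
        NijAux.eval_sum_pow _ _ t
      have e2 : Q.eval t = (∑ i : Fin n, dσ i x * t ^ (n-(i:ℕ)))
          + τ * (t^n + ∑ i : Fin n, σ i p * t ^ (n-1-(i:ℕ))) := by
        rw [hQdef, Polynomial.eval_add, Polynomial.eval_mul, Polynomial.eval_C,
          Polynomial.eval_add, Polynomial.eval_pow, Polynomial.eval_X,
          NijAux.eval_sum_pow, NijAux.eval_sum_pow]
      have h1 := hkey2' t (A *ᵥ x)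
      have h2 := hkey2' t x
      have h4 := hkey4 t ht x
      have hχt : χ.eval t = t^n + ∑ i : Fin n, σ i p * t ^ (n-1-(i:ℕ)) := by
        rw [hχeval t]
        exact hgU t p hp
      rw [e1, e2, ← h1, h4]
      have h5 : ∑ i : Fin n, dσ i x * t ^ (n-(i:ℕ))
          = t * ∑ i : Fin n, dσ i x * t ^ (n-1-(i:ℕ)) := by
        rw [Finset.mul_sum]
        refine Finset.sum_congr rfl fun i _ => ?_
        have hexp : n - (i:ℕ) = (n-1-(i:ℕ)) + 1 := by have := i.isLt; omega
        rw [hexp, pow_succ]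
        ring
      rw [h5, ← h2, ← hχt]
      ring
    have hPQ : P = Q := by
      rw [← sub_eq_zero]
      apply Polynomial.eq_zero_of_infinite_isRoot
      refine hGinf.mono fun t ht => ?_
      show (P - Q).IsRoot t
      rw [Polynomial.IsRoot, Polynomial.eval_sub, hPQeval t ht, sub_self]
    -- coefficient at n : τ = - dσ i0 x
    have hτval : τ = - dσ i0 x := by
      have hc := congrArg (fun r : Polynomial ℝ => r.coeff n) hPQ
      rw [hPdef, hQdef] at hc
      rw [NijAux.coeff_sum_pow] at hc
      rw [Polynomial.coeff_add, NijAux.coeff_sum_pow, Polynomial.coeff_C_mul,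
        Polynomial.coeff_add, Polynomial.coeff_X_pow, if_pos rfl,
        NijAux.coeff_sum_pow] at hc
      have hL : (∑ i : Fin n, if n = n-1-(i:ℕ) then dσ i (A *ᵥ x) else 0) = 0 := by
        refine Finset.sum_eq_zero fun i _ => ?_
        have : ¬ (n = n-1-(i:ℕ)) := by have := i.isLt; omega
        rw [if_neg this]
      have hR1 : (∑ i : Fin n, if n = n-(i:ℕ) then dσ i x else 0) = dσ i0 x := by
        rw [Finset.sum_eq_single i0]
        · rw [if_pos (by simp [hi0])]
        · intro k _ hk
          have hkne : (k:ℕ) ≠ 0 := by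
            intro hc0; exact hk (Fin.ext (by simp [hi0, hc0]))
          have : ¬ (n = n-(k:ℕ)) := by have := k.isLt; omega
          rw [if_neg this]
        · intro hni; exact absurd (Finset.mem_univ i0) hni
      have hR2 : (∑ i : Fin n, if n = n-1-(i:ℕ) then σ i p else 0) = 0 := by
        refine Finset.sum_eq_zero fun i _ => ?_
        have : ¬ (n = n-1-(i:ℕ)) := by have := i.isLt; omega
        rw [if_neg this]
      rw [hL, hR1, hR2] at hc
      -- hc : 0 = dσ i0 x + τ * (1 + 0)
      have : 0 = dσ i0 x + τ := by rw [hc]; ring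
      linarith
    -- coefficient at n-1-i
    intro i
    have hc := congrArg (fun r : Polynomial ℝ => r.coeff (n-1-(i:ℕ))) hPQ
    rw [hPdef, hQdef] at hc
    rw [NijAux.coeff_sum_pow] at hc
    rw [Polynomial.coeff_add, NijAux.coeff_sum_pow, Polynomial.coeff_C_mul,
      Polynomial.coeff_add, Polynomial.coeff_X_pow, NijAux.coeff_sum_pow] at hc
    have hL : (∑ k : Fin n, if n-1-(i:ℕ) = n-1-(k:ℕ) then dσ k (A *ᵥ x) else 0)
        = dσ i (A *ᵥ x) := by
      rw [Finset.sum_eq_single i]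
      · rw [if_pos rfl]
      · intro k _ hk
        have hkne : (k:ℕ) ≠ (i:ℕ) := fun hc0 => hk (Fin.ext hc0)
        have : ¬ (n-1-(i:ℕ) = n-1-(k:ℕ)) := by
          have h1 := i.isLt; have h2 := k.isLt; omega
        rw [if_neg this]
      · intro hni; exact absurd (Finset.mem_univ i) hni
    have hR1 : (∑ k : Fin n, if n-1-(i:ℕ) = n-(k:ℕ) then dσ k x else 0)
        = if h : (i:ℕ)+1 < n then dσ ⟨(i:ℕ)+1, h⟩ x else 0 := by
      by_cases h : (i:ℕ)+1 < n
      · rw [dif_pos h, Finset.sum_eq_single (⟨(i:ℕ)+1, h⟩ : Fin n)]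
        · rw [if_pos (by simp; omega)]
        · intro k _ hk
          have hkne : (k:ℕ) ≠ (i:ℕ)+1 := by
            intro hc0; exact hk (Fin.ext (by simp [hc0]))
          have : ¬ (n-1-(i:ℕ) = n-(k:ℕ)) := by
            have h1 := i.isLt; have h2 := k.isLt; omega
          rw [if_neg this]
        · intro hni; exact absurd (Finset.mem_univ _) hni
      · rw [dif_neg h]
        refine Finset.sum_eq_zero fun k _ => ?_
        have : ¬ (n-1-(i:ℕ) = n-(k:ℕ)) := by
          have h1 := i.isLt; have h2 := k.isLt; omega
        rw [if_neg this]
    have hXn : (if n-1-(i:ℕ) = n then (1:ℝ) else 0) = 0 := by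
      have : ¬ (n-1-(i:ℕ) = n) := by have := i.isLt; omega
      rw [if_neg this]
    have hR2 : (∑ k : Fin n, if n-1-(i:ℕ) = n-1-(k:ℕ) then σ k p else 0) = σ i p := by
      rw [Finset.sum_eq_single i]
      · rw [if_pos rfl]
      · intro k _ hk
        have hkne : (k:ℕ) ≠ (i:ℕ) := fun hc0 => hk (Fin.ext hc0)
        have : ¬ (n-1-(i:ℕ) = n-1-(k:ℕ)) := by
          have h1 := i.isLt; have h2 := k.isLt; omega
        rw [if_neg this]
      · intro hni; exact absurd (Finset.mem_univ i) hni
    rw [hL, hR1, hXn, hR2] at hc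
    rw [hc, hτval]
    ring
  -- assemble the matrix identity  J * A = S * J
  have hJA : jacobiMatrix σ p * A = companionMatrix σ p * jacobiMatrix σ p := by
    ext i m
    have hJentry : ∀ (a b : Fin n), jacobiMatrix σ p a b = dσ a (Pi.single b 1) := by
      intro a b; rfl
    have hlhs : (jacobiMatrix σ p * A) i m = dσ i (A *ᵥ Pi.single m 1) := by
      rw [Matrix.mul_apply, NijAux.clm_apply_eq_sum (dσ i) (A *ᵥ Pi.single m 1)]
      refine Finset.sum_congr rfl fun j _ => ?_
      rw [hJentry i j]
      simp only [Matrix.mulVec_single_one, mul_one]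
      exact mul_comm _ _
    have hrhs : (companionMatrix σ p * jacobiMatrix σ p) i m
        = (if h : (i:ℕ)+1 < n then dσ ⟨(i:ℕ)+1, h⟩ (Pi.single m 1) else 0)
          - σ i p * dσ i0 (Pi.single m 1) := by
      rw [Matrix.mul_apply]
      have hterm : ∀ j : Fin n, companionMatrix σ p i j * jacobiMatrix σ p j m
          = (if j = i0 then -(σ i p) * dσ i0 (Pi.single m 1) else 0)
            + (if (j:ℕ) = (i:ℕ)+1 then dσ j (Pi.single m 1) else 0) := by
        intro j
        rw [hJentry j m, companionMatrix]
        simp only [Matrix.of_apply]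
        by_cases h0 : (j:ℕ) = 0
        · have hj : j = i0 := Fin.ext (by simpa [hi0] using h0)
          have hne : ¬ ((j:ℕ) = (i:ℕ)+1) := by omega
          rw [if_pos h0, if_pos hj, if_neg hne, hj, add_zero]
        · have hne0 : ¬ (j = i0) := fun hc => h0 (by rw [hc])
          rw [if_neg h0, if_neg hne0, zero_add]
          by_cases h1 : (j:ℕ) = (i:ℕ)+1
          · rw [if_pos h1, if_pos h1, one_mul]
          · rw [if_neg h1, if_neg h1, zero_mul]
      rw [Finset.sum_congr rfl fun j _ => hterm j, Finset.sum_add_distrib]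
      have hs1 : (∑ j : Fin n, if j = i0 then -(σ i p) * dσ i0 (Pi.single m 1) else 0)
          = -(σ i p) * dσ i0 (Pi.single m 1) := Finset.sum_ite_eq' _ i0 _ |>.trans (by simp)
      have hs2 : (∑ j : Fin n, if (j:ℕ) = (i:ℕ)+1 then dσ j (Pi.single m 1) else 0)
          = if h : (i:ℕ)+1 < n then dσ ⟨(i:ℕ)+1, h⟩ (Pi.single m 1) else 0 := by
        by_cases h : (i:ℕ)+1 < n
        · rw [dif_pos h, Finset.sum_eq_single (⟨(i:ℕ)+1, h⟩ : Fin n)]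
          · rw [if_pos (by simp)]
          · intro k _ hk
            have : ¬ ((k:ℕ) = (i:ℕ)+1) := by
              intro hc; exact hk (Fin.ext (by simp [hc]))
            rw [if_neg this]
          · intro hni; exact absurd (Finset.mem_univ _) hni
        · rw [dif_neg h]
          refine Finset.sum_eq_zero fun k _ => ?_
          have : ¬ ((k:ℕ) = (i:ℕ)+1) := by have := k.isLt; omega
          rw [if_neg this]
      rw [hs1, hs2]
      ring
    rw [hlhs, hrhs, hrowid (Pi.single m 1) i]
  -- finish
  have hJu := hJ p hp
  haveI := hJu.invertible
  calc opMatrixN L p = A := rfl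
    _ = (jacobiMatrix σ p)⁻¹ * (jacobiMatrix σ p * A) := by
        rw [Matrix.inv_mul_cancel_left_of_invertible]
    _ = (jacobiMatrix σ p)⁻¹ * (companionMatrix σ p * jacobiMatrix σ p) := by rw [hJA]
    _ = (jacobiMatrix σ p)⁻¹ * companionMatrix σ p * jacobiMatrix σ p := by
        rw [Matrix.mul_assoc]
end
end

section
/- Let U ⊆ ℝⁿ be open and let σ = (σ₁, …, σₙ) : U → ℝⁿ be a smooth map whose Jacobian matrix J(p) = (∂σᵢ/∂xⱼ(p)) is invertible at every p ∈ U. Define L(p) = J(p)⁻¹ · S_χ(p) · J(p), where S_χ(p) is the n×n matrix with first column (−σ₁(p), …, −σₙ(p))ᵀ, superdiagonal entries equal to 1, and all other entries 0. Then L is a smooth Nijenhuis operator on U, and its characteristic polynomial satisfies det(t·Id − L(p)) = tⁿ + σ₁(p)t^{n−1} + ⋯ + σₙ(p) for all p ∈ U. -/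
open Matrix Set

noncomputable section

/-! ### Auxiliary material -/

lemma comp_det : ∀ (n : ℕ) (c : Fin n → ℝ) (t : ℝ),
    (t • (1 : Matrix (Fin n) (Fin n) ℝ) -
      Matrix.of fun (i j : Fin n) => if (j : ℕ) = 0 then -c i
        else if (j : ℕ) = (i : ℕ) + 1 then 1 else 0).det
    = t ^ n + ∑ i : Fin n, c i * t ^ (n - 1 - (i : ℕ)) := by
  intro n
  induction n with
  | zero => intro c t; simp
  | succ m IH =>
    intro c t
    rcases m with _ | N
    · rw [Matrix.det_fin_one]
      simp
    · set M : Matrix (Fin (N+2)) (Fin (N+2)) ℝ :=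
        t • (1 : Matrix (Fin (N+2)) (Fin (N+2)) ℝ) -
          Matrix.of fun (i j : Fin (N+2)) => if (j : ℕ) = 0 then -c i
            else if (j : ℕ) = (i : ℕ) + 1 then 1 else 0 with hM
      have hMe : ∀ i j : Fin (N+2), M i j
          = t * (if i = j then 1 else 0) - (if (j : ℕ) = 0 then -c i
            else if (j : ℕ) = (i : ℕ) + 1 then 1 else 0) := by
        intro i j
        simp [hM, Matrix.one_apply]
      -- the 1×... lower-triangular minor at column 0
      have hM0 : (M.submatrix (Fin.last (N+1)).succAbove
          ((0 : Fin (N+2)).succAbove)).det = (-1 : ℝ)^(N+1) := by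
        rw [Matrix.det_of_lowerTriangular]
        · have hdiag : ∀ i : Fin (N+1), (M.submatrix (Fin.last (N+1)).succAbove
              ((0 : Fin (N+2)).succAbove)) i i = -1 := by
            intro i
            rw [Matrix.submatrix_apply, Fin.succAbove_last, Fin.succAbove_zero, hMe]
            have h1 : ¬ (Fin.castSucc i = Fin.succ i) := by
              intro h
              have := congrArg Fin.val h
              simp at this
            have h2 : ((Fin.succ i : Fin (N+2)) : ℕ) ≠ 0 := by simp
            simp [h1, h2]
          rw [Finset.prod_congr rfl fun i _ => hdiag i]
          simp
        · intro i j hij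
          have hij' : (i : Fin (N+1)) < j := hij
          rw [Matrix.submatrix_apply, Fin.succAbove_last, Fin.succAbove_zero, hMe]
          have h1 : ¬ (Fin.castSucc i = Fin.succ j) := by
            intro h
            have := congrArg Fin.val h
            simp at this
            omega
          have h2 : ((Fin.succ j : Fin (N+2)) : ℕ) ≠ 0 := by simp
          have h3 : ¬ ((Fin.succ j : Fin (N+2)) : ℕ) = ((Fin.castSucc i : Fin (N+2)) : ℕ) + 1 := by
            simp only [Fin.val_succ, Fin.coe_castSucc]
            have : (i : ℕ) < (j : ℕ) := hij'
            omega
          have h5 : (i : ℕ) < (j : ℕ) := hij'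
          simp [h1, h2, h3]
          omega
      -- the principal minor at the last column
      have hML : (M.submatrix (Fin.last (N+1)).succAbove
          ((Fin.last (N+1)).succAbove)).det
          = t^(N+1) + ∑ i : Fin (N+1), c i.castSucc * t^(N+1-1-(i : ℕ)) := by
        have heq : M.submatrix (Fin.last (N+1)).succAbove ((Fin.last (N+1)).succAbove)
            = t • (1 : Matrix (Fin (N+1)) (Fin (N+1)) ℝ) -
              Matrix.of (fun (i j : Fin (N+1)) => if (j : ℕ) = 0 then -(c i.castSucc)
                else if (j : ℕ) = (i : ℕ) + 1 then 1 else 0) := by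
          ext i j
          rw [Matrix.submatrix_apply, Fin.succAbove_last, hMe]
          have hcast : (Fin.castSucc i = Fin.castSucc j) ↔ i = j := by
            constructor
            · intro h; exact Fin.castSucc_injective _ h
            · intro h; rw [h]
          simp [Matrix.one_apply, hcast]
        rw [heq, IH]
      -- expand along the last row
      rw [Matrix.det_succ_row M (Fin.last (N+1))]
      have hrow : ∀ j : Fin (N+2),
          (-1 : ℝ) ^ ((Fin.last (N+1) : ℕ) + (j : ℕ)) * M (Fin.last (N+1)) j *
            (M.submatrix (Fin.last (N+1)).succAbove j.succAbove).det
          = (if j = 0 then (-1 : ℝ) ^ ((N+1 : ℕ)) * c (Fin.last (N+1)) *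
                (M.submatrix (Fin.last (N+1)).succAbove
                  ((0 : Fin (N+2)).succAbove)).det else 0)
            + (if j = Fin.last (N+1) then (-1 : ℝ) ^ ((N+1) + (N+1) : ℕ) * t *
                (M.submatrix (Fin.last (N+1)).succAbove
                  ((Fin.last (N+1)).succAbove)).det else 0) := by
        intro j
        rcases eq_or_ne j 0 with rfl | hj0
        · have hne : (0 : Fin (N+2)) ≠ Fin.last (N+1) := by
            intro h
            have := congrArg Fin.val h
            simp at this
          have hentry : M (Fin.last (N+1)) 0 = c (Fin.last (N+1)) := by
            rw [hMe]
            have : ¬ (Fin.last (N+1) = (0 : Fin (N+2))) := fun h => hne h.symm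
            simp [this]
          rw [hentry]
          simp [hne.symm, hne]
          try ring
        · rcases eq_or_ne j (Fin.last (N+1)) with rfl | hjl
          · have hentry : M (Fin.last (N+1)) (Fin.last (N+1)) = t := by
              rw [hMe]
              have h2 : ((Fin.last (N+1) : Fin (N+2)) : ℕ) ≠ 0 := by simp
              have h3 : ¬ ((Fin.last (N+1) : Fin (N+2)) : ℕ)
                  = ((Fin.last (N+1) : Fin (N+2)) : ℕ) + 1 := by omega
              simp [h2, h3]
            rw [hentry]
            have hne : (Fin.last (N+1) : Fin (N+2)) ≠ 0 := by
              intro h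
              have := congrArg Fin.val h
              simp at this
            simp [hne]
          · have hentry : M (Fin.last (N+1)) j = 0 := by
              rw [hMe]
              have h1 : ¬ (Fin.last (N+1) = j) := fun h => hjl h.symm
              have h2 : (j : ℕ) ≠ 0 := by
                intro h; exact hj0 (Fin.ext (by simpa using h))
              have h3 : ¬ ((j : Fin (N+2)) : ℕ) = ((Fin.last (N+1) : Fin (N+2)) : ℕ) + 1 := by
                have := j.isLt
                simp only [Fin.val_last]
                omega
              have h4 := j.isLt
              simp [h1, h2, h3]
              omega
            rw [hentry]
            simp [hj0, hjl]
      rw [Finset.sum_congr rfl fun j _ => hrow j, Finset.sum_add_distrib,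
        Finset.sum_ite_eq' Finset.univ (0 : Fin (N+2)),
        Finset.sum_ite_eq' Finset.univ (Fin.last (N+1))]
      simp only [Finset.mem_univ, if_true]
      rw [hM0, hML]
      have hpow : (-1 : ℝ) ^ ((N+1 : ℕ)) * c (Fin.last (N+1)) * (-1 : ℝ)^(N+1)
          = c (Fin.last (N+1)) := by
        rw [mul_comm ((-1 : ℝ) ^ ((N+1 : ℕ))) (c (Fin.last (N+1))), mul_assoc,
          ← pow_add, Even.neg_one_pow ⟨N+1, by ring⟩, mul_one]
      rw [hpow, Even.neg_one_pow (n := (N+1)+(N+1)) ⟨N+1, by ring⟩, one_mul]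
      -- now pure algebra with the sums
      rw [Fin.sum_univ_castSucc (n := N+1) (f := fun i => c i * t ^ (N + 2 - 1 - (i : ℕ)))]
      have hlast : c (Fin.last (N+1)) * t ^ (N + 2 - 1 - ((Fin.last (N+1) : Fin (N+2)) : ℕ)) = c (Fin.last (N+1)) := by
        simp
      rw [hlast]
      rw [mul_add, Finset.mul_sum]
      have hterm : ∀ i : Fin (N+1),
          t * (c i.castSucc * t ^ (N + 1 - 1 - (i : ℕ)))
          = c i.castSucc * t ^ (N + 2 - 1 - ((i.castSucc : Fin (N+2)) : ℕ)) := by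
        intro i
        have hi : (i : ℕ) ≤ N := by
          have := i.isLt; omega
        have : N + 2 - 1 - ((i.castSucc : Fin (N+2)) : ℕ) = (N + 1 - 1 - (i : ℕ)) + 1 := by
          simp only [Fin.coe_castSucc]
          omega
        rw [this, pow_succ]
        ring
      rw [Finset.sum_congr rfl fun i _ => hterm i]
      ring_nf


abbrev EE (n : ℕ) := Fin n → ℝ
abbrev AA (n : ℕ) := EE n →L[ℝ] EE n

section Aux

variable {n : ℕ}

def matCLM (M : Matrix (Fin n) (Fin n) ℝ) : AA n :=
  (Matrix.mulVecLin M).toContinuousLinearMap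

lemma matCLM_apply (M : Matrix (Fin n) (Fin n) ℝ) (v : EE n) :
    matCLM M v = M.mulVec v := rfl

lemma matCLM_mul (M N : Matrix (Fin n) (Fin n) ℝ) :
    matCLM (M * N) = matCLM M * matCLM N := by
  ext v i
  simp [matCLM_apply, ContinuousLinearMap.mul_apply, Matrix.mulVec_mulVec]

lemma matCLM_one : matCLM (1 : Matrix (Fin n) (Fin n) ℝ) = 1 := by
  ext v i
  simp [matCLM_apply]

def Phi (σ : Fin n → (Fin n → ℝ) → ℝ) : EE n → EE n := fun p i => σ i p

def jC (σ : Fin n → (Fin n → ℝ) → ℝ) : EE n → AA n := fun p => fderiv ℝ (Phi σ) p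

lemma jC_eq {σ : Fin n → (Fin n → ℝ) → ℝ} {p : EE n}
    (hd : ∀ i, DifferentiableAt ℝ (σ i) p) :
    jC σ p = matCLM (jacobiMatrix σ p) := by
  have hPhi : fderiv ℝ (Phi σ) p = ContinuousLinearMap.pi fun i => fderiv ℝ (σ i) p :=
    fderiv_pi hd
  ext v i
  rw [jC, hPhi]
  have hv : v = ∑ j : Fin n, v j • (Pi.single j (1:ℝ) : EE n) := by
    ext k
    simp [Pi.single_apply, Finset.sum_apply, mul_comm]
  rw [matCLM_apply]
  conv_lhs => rw [hv]
  simp only [map_sum, _root_.map_smul, ContinuousLinearMap.pi_apply]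
  simp [Matrix.mulVec, jacobiMatrix, dotProduct, Finset.sum_apply, mul_comm]

def shMat (n : ℕ) : Matrix (Fin n) (Fin n) ℝ :=
  Matrix.of fun i j => if (j : ℕ) = (i : ℕ) + 1 then 1 else 0

def rankOne [NeZero n] (y : EE n) : AA n :=
  (ContinuousLinearMap.proj (0 : Fin n)).smulRight y

lemma rankOne_apply [NeZero n] (y v : EE n) : rankOne y v = v 0 • y := rfl

lemma companion_decomp [NeZero n] (σ : Fin n → (Fin n → ℝ) → ℝ) (p : EE n) :
    matCLM (companionMatrix σ p) = matCLM (shMat n) - rankOne (Phi σ p) := by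
  ext v i
  simp only [ContinuousLinearMap.sub_apply, matCLM_apply, rankOne_apply,
    Pi.sub_apply, Pi.smul_apply, smul_eq_mul]
  rw [Matrix.mulVec, Matrix.mulVec, dotProduct, dotProduct]
  have key : ∀ j : Fin n, companionMatrix σ p i j * v j
      = shMat n i j * v j - (if j = (0 : Fin n) then σ i p * v 0 else 0) := by
    intro j
    rcases eq_or_ne j 0 with rfl | hj
    · simp [companionMatrix, shMat]
    · have hj' : (j : ℕ) ≠ 0 := fun h => hj (Fin.ext (by simp [h]))
      simp [companionMatrix, shMat, hj', hj]
  rw [Finset.sum_congr rfl fun j _ => key j, Finset.sum_sub_distrib,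
    Finset.sum_ite_eq' Finset.univ (0 : Fin n)]
  simp [Phi, mul_comm]

lemma smulRightL_app (c : EE n →L[ℝ] ℝ) (f x : EE n) :
    (ContinuousLinearMap.smulRightL ℝ (EE n) (EE n) c f) x = c x • f := rfl

def sC [NeZero n] (σ : Fin n → (Fin n → ℝ) → ℝ) : EE n → AA n :=
  fun p => matCLM (shMat n) - rankOne (Phi σ p)

def aC [NeZero n] (σ : Fin n → (Fin n → ℝ) → ℝ) : EE n → AA n :=
  fun p => Ring.inverse (jC σ p) * (sC σ p * jC σ p)

end Aux


set_option maxHeartbeats 1000000 in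
/-- **Theorem (converse construction).** If `σ = (σ₁, …, σₙ) : U → ℝⁿ` is smooth with
everywhere invertible Jacobian `J(p)`, then `L(p) = J(p)⁻¹ · S_χ(p) · J(p)` defines a
smooth Nijenhuis operator on `U` whose characteristic polynomial is
`tⁿ + σ₁(p) t^(n−1) + ⋯ + σₙ(p)`. -/
theorem nijenhuis_of_functionally_independent_invariants
    (n : ℕ) (U : Set (Fin n → ℝ)) (hU : IsOpen U)
    (σ : Fin n → (Fin n → ℝ) → ℝ)
    (hσsmooth : ∀ i, ContDiffOn ℝ (⊤ : ℕ∞) (σ i) U)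
    (hJ : ∀ p ∈ U, IsUnit (jacobiMatrix σ p))
    (L : (Fin n → ℝ) → ((Fin n → ℝ) →L[ℝ] (Fin n → ℝ)))
    (hLdef : ∀ p ∈ U,
      opMatrixN L p = (jacobiMatrix σ p)⁻¹ * companionMatrix σ p * jacobiMatrix σ p) :
    ContDiffOn ℝ (⊤ : ℕ∞) L U ∧ IsNijenhuisOnN L U ∧ CharCoeffsOnN L U σ := by
  -- characteristic polynomial, purely matrix-level
  have hchar : CharCoeffsOnN L U σ := by
    intro p hp t
    rw [hLdef p hp]
    have hdet : IsUnit (jacobiMatrix σ p).det :=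
      (Matrix.isUnit_iff_isUnit_det _).1 (hJ p hp)
    have key : t • (1 : Matrix (Fin n) (Fin n) ℝ)
        - (jacobiMatrix σ p)⁻¹ * companionMatrix σ p * jacobiMatrix σ p
        = (jacobiMatrix σ p)⁻¹ *
          ((t • (1 : Matrix (Fin n) (Fin n) ℝ) - companionMatrix σ p) * jacobiMatrix σ p) := by
      rw [Matrix.sub_mul, Matrix.mul_sub, Matrix.smul_mul, Matrix.one_mul,
        Matrix.mul_smul, Matrix.nonsing_inv_mul _ hdet, ← Matrix.mul_assoc]
    rw [key, Matrix.det_mul, Matrix.det_mul, Matrix.det_nonsing_inv]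
    rw [mul_comm (Ring.inverse (jacobiMatrix σ p).det) _, mul_assoc,
      Ring.mul_inverse_cancel _ hdet, mul_one]
    have : companionMatrix σ p = Matrix.of fun (i j : Fin n) =>
        if (j : ℕ) = 0 then -(fun i => σ i p) i
        else if (j : ℕ) = (i : ℕ) + 1 then 1 else 0 := rfl
    rw [this, comp_det n (fun i => σ i p) t]
  rcases Nat.eq_zero_or_pos n with rfl | hn
  · refine ⟨?_, ?_, hchar⟩
    · have : L = fun _ => 0 := by
        funext p
        ext v i
        exact absurd i.isLt (by omega)
      rw [this]
      exact contDiffOn_const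
    · intro u v p hp
      ext i
      exact absurd i.isLt (by omega)
  haveI : NeZero n := ⟨by omega⟩
  -- basic differentiability facts
  have hΦ : ContDiffOn ℝ (⊤ : ℕ∞) (Phi σ) U := by
    rw [contDiffOn_pi]
    exact hσsmooth
  have hΦdiff : ∀ p ∈ U, DifferentiableAt ℝ (Phi σ) p := fun p hp =>
    (hΦ.differentiableOn (by simp)).differentiableAt (hU.mem_nhds hp)
  have hσdiff : ∀ p ∈ U, ∀ i, DifferentiableAt ℝ (σ i) p := fun p hp i =>
    ((hσsmooth i).differentiableOn (by simp)).differentiableAt (hU.mem_nhds hp)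
  have hjCU : ContDiffOn ℝ (⊤ : ℕ∞) (jC σ) U := hΦ.fderiv_of_isOpen hU (by simp)
  -- units
  have hunit : ∀ p ∈ U, jC σ p * matCLM (jacobiMatrix σ p)⁻¹ = 1
      ∧ matCLM (jacobiMatrix σ p)⁻¹ * jC σ p = 1 := by
    intro p hp
    have hdet : IsUnit (jacobiMatrix σ p).det :=
      (Matrix.isUnit_iff_isUnit_det _).1 (hJ p hp)
    rw [jC_eq (hσdiff p hp)]
    constructor
    · rw [← matCLM_mul, Matrix.mul_nonsing_inv _ hdet, matCLM_one]
    · rw [← matCLM_mul, Matrix.nonsing_inv_mul _ hdet, matCLM_one]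
  have hUnits : ∀ p ∈ U, IsUnit (jC σ p) := by
    intro p hp
    exact ⟨⟨jC σ p, matCLM (jacobiMatrix σ p)⁻¹, (hunit p hp).1, (hunit p hp).2⟩, rfl⟩
  have hRinv : ∀ p ∈ U, Ring.inverse (jC σ p) = matCLM (jacobiMatrix σ p)⁻¹ := by
    intro p hp
    exact Ring.inverse_unit ⟨jC σ p, matCLM (jacobiMatrix σ p)⁻¹, (hunit p hp).1, (hunit p hp).2⟩
  -- identification of L with aC on U
  have hLeq : ∀ p ∈ U, L p = aC σ p := by
    intro p hp
    ext u i
    have h1 : L p u = (opMatrixN L p).mulVec u := by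
      rw [opMatrixN, ← Matrix.toLin'_apply, Matrix.toLin'_toMatrix']
      rfl
    rw [h1, hLdef p hp, ← matCLM_apply, matCLM_mul, matCLM_mul, ← hRinv p hp,
      companion_decomp σ p, ← jC_eq (hσdiff p hp), mul_assoc]
    rfl
  -- smoothness of aC on U
  have haC : ContDiffOn ℝ (⊤ : ℕ∞) (aC σ) U := by
    intro p hp
    have hjat : ContDiffAt ℝ (⊤ : ℕ∞) (jC σ) p := hjCU.contDiffAt (hU.mem_nhds hp)
    have hinv : ContDiffAt ℝ (⊤ : ℕ∞) (fun q => Ring.inverse (jC σ q)) p := by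
      obtain ⟨uu, huu⟩ := hUnits p hp
      have h := contDiffAt_ringInverse (𝕜 := ℝ) (R := AA n) (n := (⊤ : ℕ∞)) uu
      rw [huu] at h
      exact h.comp p hjat
    have hsat : ContDiffAt ℝ (⊤ : ℕ∞) (sC σ) p := by
      have h1 : ContDiffAt ℝ (⊤ : ℕ∞) (Phi σ) p := hΦ.contDiffAt (hU.mem_nhds hp)
      have h2 : ContDiff ℝ (⊤ : ℕ∞) (fun y : EE n => rankOne y) := by
        have : (fun y : EE n => rankOne y)
            = fun y => (ContinuousLinearMap.smulRightL ℝ (EE n) (EE n)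
                (ContinuousLinearMap.proj (0 : Fin n))) y := rfl
        rw [this]
        exact (ContinuousLinearMap.smulRightL ℝ (EE n) (EE n)
          (ContinuousLinearMap.proj (0 : Fin n))).contDiff
      exact contDiffAt_const.sub (h2.contDiffAt.comp p h1)
    exact ((hinv.mul (hsat.mul hjat)) : ContDiffAt ℝ (⊤ : ℕ∞) (aC σ) p).contDiffWithinAt
  refine ⟨haC.congr hLeq, ?_, hchar⟩
  -- Nijenhuis property
  intro u v p hp
  have hnhds : U ∈ nhds p := hU.mem_nhds hp
  obtain ⟨uu, huu⟩ := hUnits p hp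
  have hjat : ContDiffAt ℝ (⊤ : ℕ∞) (jC σ) p := hjCU.contDiffAt hnhds
  have hJd : HasFDerivAt (jC σ) (fderiv ℝ (jC σ) p) p :=
    (hjat.differentiableAt (by simp)).hasFDerivAt
  set H : EE n →L[ℝ] AA n := fderiv ℝ (jC σ) p with hH
  have hsymm : ∀ w x : EE n, H w x = H x w := by
    intro w x
    have hf : ∀ᶠ q in nhds p, HasFDerivAt (Phi σ) (jC σ q) q := by
      filter_upwards [hnhds] with q hq
      exact (hΦdiff q hq).hasFDerivAt
    exact second_derivative_symmetric_of_eventually hf hJd w x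
  have hΦd : HasFDerivAt (Phi σ) (jC σ p) p := (hΦdiff p hp).hasFDerivAt
  set G : EE n →L[ℝ] AA n := ContinuousLinearMap.smulRightL ℝ (EE n) (EE n)
    (ContinuousLinearMap.proj (0 : Fin n)) with hG
  have hSd : HasFDerivAt (sC σ) (-(G.comp (jC σ p))) p := by
    have h1 : HasFDerivAt (fun q => G (Phi σ q)) (G.comp (jC σ p)) p :=
      G.hasFDerivAt.comp p hΦd
    have h2 := (hasFDerivAt_const (matCLM (shMat n)) p).sub h1
    rw [zero_sub] at h2
    exact h2
  have hPvu : (↑uu⁻¹ : AA n) = Ring.inverse (jC σ p) := by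
    rw [← Ring.inverse_unit uu, huu]
  have hPd : HasFDerivAt (fun q => Ring.inverse (jC σ q))
      ((-(ContinuousLinearMap.mulLeftRight ℝ (AA n)
        (Ring.inverse (jC σ p)) (Ring.inverse (jC σ p)))).comp H) p := by
    have h0 := hasFDerivAt_ringInverse (𝕜 := ℝ) uu
    rw [huu, hPvu] at h0
    exact h0.comp p hJd
  have hSJ := hSd.mul' hJd
  have haD' : HasFDerivAt (aC σ) _ p := hPd.mul' hSJ
  have hF : HasFDerivAt (aC σ) (fderiv ℝ (aC σ) p) p :=
    haD'.differentiableAt.hasFDerivAt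
  -- identities
  have hPJ1 : Ring.inverse (jC σ p) * jC σ p = 1 := by
    rw [hRinv p hp]; exact (hunit p hp).2
  have hJP1 : jC σ p * Ring.inverse (jC σ p) = 1 := by
    rw [hRinv p hp]; exact (hunit p hp).1
  have hPJ : ∀ x : EE n, Ring.inverse (jC σ p) (jC σ p x) = x := by
    intro x
    have := congrArg (fun f : AA n => f x) hPJ1
    simpa [ContinuousLinearMap.mul_apply] using this
  have hJP : ∀ x : EE n, jC σ p (Ring.inverse (jC σ p) x) = x := by
    intro x
    have := congrArg (fun f : AA n => f x) hJP1
    simpa [ContinuousLinearMap.mul_apply] using this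
  -- the derivative of aC, applied to vectors
  have hDwx : ∀ w x : EE n,
      fderiv ℝ (aC σ) p w x
        = Ring.inverse (jC σ p) (sC σ p (H w x)) - (jC σ p x 0) • w
          - Ring.inverse (jC σ p) (H w (Ring.inverse (jC σ p) (sC σ p (jC σ p x)))) := by
    intro w x
    rw [haD'.fderiv]
    simp only [ContinuousLinearMap.add_apply, ContinuousLinearMap.smul_apply,
      ContinuousLinearMap.smulRight_apply, ContinuousLinearMap.comp_apply,
      ContinuousLinearMap.neg_apply, ContinuousLinearMap.mulLeftRight_apply,
      ContinuousLinearMap.mul_apply, hG, smulRightL_app,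
      ContinuousLinearMap.proj_apply, Pi.smul_apply, smul_eq_mul]
    simp [hPJ, sub_eq_add_neg]
  -- the derivative of L · w
  have hLev : ∀ w : EE n, fderiv ℝ (fun q => L q w) p = (fderiv ℝ (aC σ) p).flip w := by
    intro w
    have hee : (fun q => L q w) =ᶠ[nhds p] (fun q => aC σ q w) := by
      filter_upwards [hnhds] with q hq
      rw [hLeq q hq]
    rw [hee.fderiv_eq]
    have h2 := (hF.clm_apply (hasFDerivAt_const w p)).fderiv
    rw [ContinuousLinearMap.comp_zero, zero_add] at h2
    exact h2
  have hLp : ∀ x : EE n, L p x = Ring.inverse (jC σ p) (sC σ p (jC σ p x)) := by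
    intro x
    rw [hLeq p hp]
    rfl
  simp only [VBracketN, hLev, fderiv_fun_const, ContinuousLinearMap.flip_apply, hLp,
    Pi.zero_apply, ContinuousLinearMap.zero_apply]
  simp only [hDwx]
  simp only [zero_sub, sub_zero, map_sub, map_add, map_zero, map_neg, _root_.map_smul,
    hPJ, hJP, neg_neg]
  rw [hsymm ((Ring.inverse (jC σ p)) ((sC σ p) ((jC σ p) u)))
      ((Ring.inverse (jC σ p)) ((sC σ p) ((jC σ p) v))),
    hsymm ((Ring.inverse (jC σ p)) ((sC σ p) ((jC σ p) u))) v,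
    hsymm ((Ring.inverse (jC σ p)) ((sC σ p) ((jC σ p) v))) u,
    hsymm v u]
  module
end
end

section
/- Let I ⊆ ℝ be an open interval and let a, f, g : I → ℝ be smooth functions satisfying, for all x ∈ I: a(x) = x − f'(x), f'(x)·a(x) = f(x) + g'(x), and g'(x)·a(x) = g(x). Then exactly one of the following holds on all of I: (1) there exist α, γ ∈ ℝ with f(x) = αx − γ − α², a(x) = x − α, and g(x) = γ(x − α); (2) f(x) = x²/3, a(x) = x/3, and g(x) = −x³/27; (3) there exists c ∈ ℝ with f(x) = x²/4 − cx/3 − c²/3, a(x) = x/2 + c/3, and g(x) = (c/6)(x + 2c/3)². -/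
open Set

private lemma const_of_deriv_zero' (I : Set ℝ) (hIopen : IsOpen I) (hIconn : I.OrdConnected)
    (h : ℝ → ℝ) (hd : ∀ x ∈ I, DifferentiableAt ℝ h x) (hz : ∀ x ∈ I, deriv h x = 0)
    {x y : ℝ} (hx : x ∈ I) (hy : y ∈ I) : h x = h y := by
  refine (convex_iff_ordConnected.2 hIconn).is_const_of_fderivWithin_eq_zero
    (fun z hz' => (hd z hz').differentiableWithinAt) (fun z hzI => ?_) hx hy
  rw [fderivWithin_of_isOpen hIopen hzI]
  have h0 : HasDerivAt h 0 z := by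
    have := (hd z hzI).hasDerivAt; rwa [hz z hzI] at this
  rw [h0.hasFDerivAt.fderiv]; ext; simp

/-- **Theorem (trichotomy for the ODE system `a = x − f'`, `f'a = f + g'`, `g'a = g`).**
On a nonempty open interval exactly one of the three alternatives holds. -/
theorem ode_system_trichotomy
    (I : Set ℝ) (hIopen : IsOpen I) (hIconn : I.OrdConnected) (hIne : I.Nonempty)
    (a f g : ℝ → ℝ)
    (ha : ContDiffOn ℝ (⊤ : ℕ∞) a I) (hf : ContDiffOn ℝ (⊤ : ℕ∞) f I) (hg : ContDiffOn ℝ (⊤ : ℕ∞) g I)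
    (h1 : ∀ x ∈ I, a x = x - deriv f x)
    (h2 : ∀ x ∈ I, deriv f x * a x = f x + deriv g x)
    (h3 : ∀ x ∈ I, deriv g x * a x = g x) :
    let P1 := ∃ α γ : ℝ, ∀ x ∈ I,
      f x = α * x - γ - α ^ 2 ∧ a x = x - α ∧ g x = γ * (x - α)
    let P2 := ∀ x ∈ I,
      f x = x ^ 2 / 3 ∧ a x = x / 3 ∧ g x = -x ^ 3 / 27
    let P3 := ∃ c : ℝ, ∀ x ∈ I,
      f x = x ^ 2 / 4 - c * x / 3 - c ^ 2 / 3 ∧ a x = x / 2 + c / 3 ∧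
        g x = c / 6 * (x + 2 * c / 3) ^ 2
    (P1 ∨ P2 ∨ P3) ∧ ¬(P1 ∧ P2) ∧ ¬(P1 ∧ P3) ∧ ¬(P2 ∧ P3) := by
  intro P1 P2 P3
  have hI' : ∀ x ∈ I, I ∈ nhds x := fun x hx => hIopen.mem_nhds hx
  -- smoothness bookkeeping
  have hu : ContDiffOn ℝ (⊤ : ℕ∞) (deriv f) I := hf.deriv_of_isOpen hIopen (by simp)
  have hv : ContDiffOn ℝ (⊤ : ℕ∞) (deriv g) I := hg.deriv_of_isOpen hIopen (by simp)
  have hp : ContDiffOn ℝ (⊤ : ℕ∞) (deriv (deriv f)) I := hu.deriv_of_isOpen hIopen (by simp)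
  have hfd : ∀ x ∈ I, DifferentiableAt ℝ f x :=
    fun x hx => (hf.differentiableOn (by simp)).differentiableAt (hI' x hx)
  have hud : ∀ x ∈ I, DifferentiableAt ℝ (deriv f) x :=
    fun x hx => (hu.differentiableOn (by simp)).differentiableAt (hI' x hx)
  have hvd : ∀ x ∈ I, DifferentiableAt ℝ (deriv g) x :=
    fun x hx => (hv.differentiableOn (by simp)).differentiableAt (hI' x hx)
  have hpc : ContinuousOn (deriv (deriv f)) I := hp.continuousOn
  -- rewrite hypotheses without `a`
  have h2' : ∀ y ∈ I, deriv f y * (y - deriv f y) = f y + deriv g y := by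
    intro y hy; rw [← h1 y hy]; exact h2 y hy
  have h3' : ∀ y ∈ I, deriv g y * (y - deriv f y) = g y := by
    intro y hy; rw [← h1 y hy]; exact h3 y hy
  have deriv_congr : ∀ {F G : ℝ → ℝ}, (∀ y ∈ I, F y = G y) →
      ∀ x ∈ I, deriv F x = deriv G x := by
    intro F G h x hx
    exact Filter.EventuallyEq.deriv_eq (Filter.eventuallyEq_of_mem (hI' x hx) fun y hy => h y hy)
  -- E5 : v' = p (x - 2u)
  have hE5 : ∀ x ∈ I, deriv (deriv g) x = deriv (deriv f) x * (x - 2 * deriv f x) := by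
    intro x hx
    have h := deriv_congr h2' x hx
    have hL : deriv (fun y => deriv f y * (y - deriv f y)) x
        = deriv (deriv f) x * (x - deriv f x) + deriv f x * (1 - deriv (deriv f) x) := by
      rw [deriv_fun_mul (hud x hx) (differentiableAt_fun_id.fun_sub (hud x hx)),
        deriv_fun_sub differentiableAt_fun_id (hud x hx)]
      simp
    have hR : deriv (fun y => f y + deriv g y) x = deriv f x + deriv (deriv g) x := by
      rw [deriv_fun_add (hfd x hx) (hvd x hx)]
    rw [hL, hR] at h
    linear_combination -h
  -- E4 : v'(x-u) = v p
  have hE4 : ∀ x ∈ I, deriv (deriv g) x * (x - deriv f x)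
      = deriv g x * deriv (deriv f) x := by
    intro x hx
    have h := deriv_congr h3' x hx
    have hL : deriv (fun y => deriv g y * (y - deriv f y)) x
        = deriv (deriv g) x * (x - deriv f x) + deriv g x * (1 - deriv (deriv f) x) := by
      rw [deriv_fun_mul (hvd x hx) (differentiableAt_fun_id.fun_sub (hud x hx)),
        deriv_fun_sub differentiableAt_fun_id (hud x hx)]
      simp
    rw [hL] at h
    linear_combination h
  -- p * W = 0
  set W : ℝ → ℝ := fun y => (y - 2 * deriv f y) * (y - deriv f y) - deriv g y with hWdef
  have hpw : ∀ x ∈ I, deriv (deriv f) x * W x = 0 := by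
    intro x hx
    simp only [hWdef]
    linear_combination hE4 x hx - (x - deriv f x) * hE5 x hx
  have hWd : ∀ x ∈ I, DifferentiableAt ℝ W x := by
    intro x hx
    exact ((differentiableAt_fun_id.sub ((hud x hx).const_mul 2)).mul
      (differentiableAt_fun_id.sub (hud x hx))).sub (hvd x hx)
  have hW' : ∀ x ∈ I, deriv W x
      = (2 * x - 3 * deriv f x) * (1 - 2 * deriv (deriv f) x) := by
    intro x hx
    have : deriv W x = ((1 - 2 * deriv (deriv f) x) * (x - deriv f x)
        + (x - 2 * deriv f x) * (1 - deriv (deriv f) x)) - deriv (deriv g) x := by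
      simp only [hWdef]
      rw [deriv_fun_sub ((differentiableAt_fun_id.fun_sub ((hud x hx).const_mul 2)).fun_mul
            (differentiableAt_fun_id.fun_sub (hud x hx))) (hvd x hx),
        deriv_fun_mul (differentiableAt_fun_id.fun_sub ((hud x hx).const_mul 2))
          (differentiableAt_fun_id.fun_sub (hud x hx)),
        deriv_fun_sub differentiableAt_fun_id ((hud x hx).const_mul 2),
        deriv_fun_sub differentiableAt_fun_id (hud x hx), deriv_const_mul 2 (hud x hx)]
      simp
    rw [this, hE5 x hx]
    ring
  -- the second derivative takes values in {0, 1/2, 2/3}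
  have hval : ∀ x ∈ I, deriv (deriv f) x = 0 ∨ deriv (deriv f) x = 1/2
      ∨ deriv (deriv f) x = 2/3 := by
    intro x hx
    by_contra hcon
    push_neg at hcon
    obtain ⟨hne0, hne12, hne23⟩ := hcon
    -- the open set where p ≠ 0 and p ≠ 1/2
    set S : Set ℝ := I ∩ (deriv (deriv f)) ⁻¹' ({0, 1/2}ᶜ) with hSdef
    have hSopen : IsOpen S :=
      hpc.isOpen_inter_preimage hIopen (isClosed_singleton.union isClosed_singleton).isOpen_compl
    have hxS : x ∈ S := by
      refine ⟨hx, ?_⟩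
      simp only [mem_preimage, mem_compl_iff, mem_insert_iff, mem_singleton_iff]
      tauto
    -- on S, W = 0
    have hW0 : ∀ y ∈ S, W y = 0 := by
      rintro y ⟨hyI, hyp⟩
      simp only [mem_preimage, mem_compl_iff, mem_insert_iff, mem_singleton_iff] at hyp
      push_neg at hyp
      have := hpw y hyI
      exact (mul_eq_zero.1 this).resolve_left hyp.1
    -- hence deriv W = 0 on S, so 2y - 3 u y = 0 on S
    have hu23 : ∀ y ∈ S, deriv f y = 2 * y / 3 := by
      rintro y hyS
      obtain ⟨hyI, hyp⟩ := hyS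
      simp only [mem_preimage, mem_compl_iff, mem_insert_iff, mem_singleton_iff] at hyp
      push_neg at hyp
      have hWzero : deriv W y = 0 := by
        have : W =ᶠ[nhds y] (fun _ => (0:ℝ)) :=
          Filter.eventuallyEq_of_mem (hSopen.mem_nhds ⟨hyI, by
            simp only [mem_preimage, mem_compl_iff, mem_insert_iff, mem_singleton_iff]
            tauto⟩) fun z hz => hW0 z hz
        rw [this.deriv_eq, deriv_const]
      have h := hW' y hyI
      rw [hWzero] at h
      have h2 : (2 * y - 3 * deriv f y) = 0 := by
        rcases mul_eq_zero.1 h.symm with h' | h'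
        · exact h'
        · exfalso; apply hyp.2; linarith
      linarith
    -- hence p x = 2/3, contradiction
    have : deriv (deriv f) x = 2/3 := by
      have heq : deriv f =ᶠ[nhds x] (fun y => 2 * y / 3) :=
        Filter.eventuallyEq_of_mem (hSopen.mem_nhds hxS) fun z hz => hu23 z hz
      rw [heq.deriv_eq]
      have : HasDerivAt (fun y : ℝ => 2 * y / 3) (2/3) x := by
        simpa using ((hasDerivAt_id x).const_mul 2).div_const 3
      rw [this.deriv]
    exact hne23 this
  -- p is constant on I
  have hconst : ∀ x ∈ I, ∀ y ∈ I, deriv (deriv f) x = deriv (deriv f) y := by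
    intro x hx y hy
    by_contra hne
    have himg : IsPreconnected ((deriv (deriv f)) '' I) :=
      (hIconn.isPreconnected).image _ hpc
    have hoc : ((deriv (deriv f)) '' I).OrdConnected := himg.ordConnected
    have hmmem : (deriv (deriv f) x + deriv (deriv f) y) / 2 ∈ (deriv (deriv f)) '' I := by
      apply hoc.uIcc_subset (mem_image_of_mem _ hx) (mem_image_of_mem _ hy)
      rcases le_total (deriv (deriv f) x) (deriv (deriv f) y) with h | h
      · rw [uIcc_of_le h, mem_Icc]; constructor <;> linarith
      · rw [uIcc_of_ge h, mem_Icc]; constructor <;> linarith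
    obtain ⟨z, hzI, hz⟩ := hmmem
    rcases hval x hx with h1v | h1v | h1v <;> rcases hval y hy with h2v | h2v | h2v <;>
      rw [h1v, h2v] at hne hz <;> rcases hval z hzI with h3v | h3v | h3v <;>
      rw [h3v] at hz <;> first | (exact hne rfl) | norm_num at hz
  obtain ⟨x₀, hx₀⟩ := hIne
  -- useful consequences used in every branch
  have hfx : ∀ x ∈ I, f x = deriv f x * (x - deriv f x) - deriv g x := by
    intro x hx; have := h2' x hx; linarith
  have hgx : ∀ x ∈ I, g x = deriv g x * (x - deriv f x) := fun x hx => (h3' x hx).symm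
  -- trichotomy
  have main : P1 ∨ P2 ∨ P3 := by
    rcases hval x₀ hx₀ with hc | hc | hc
    · -- Case p ≡ 0 : affine family
      left
      have hp0 : ∀ x ∈ I, deriv (deriv f) x = 0 := by
        intro x hx; rw [hconst x hx x₀ hx₀]; exact hc
      have huc : ∀ x ∈ I, deriv f x = deriv f x₀ := fun x hx =>
        const_of_deriv_zero' I hIopen hIconn (deriv f) hud hp0 hx hx₀
      have hv0 : ∀ x ∈ I, deriv (deriv g) x = 0 := by
        intro x hx; rw [hE5 x hx, hp0 x hx]; ring
      have hvc : ∀ x ∈ I, deriv g x = deriv g x₀ := fun x hx =>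
        const_of_deriv_zero' I hIopen hIconn (deriv g) hvd hv0 hx hx₀
      refine ⟨deriv f x₀, deriv g x₀, fun x hx => ?_⟩
      have hux := huc x hx
      have hvx := hvc x hx
      refine ⟨?_, ?_, ?_⟩
      · rw [hfx x hx, hux, hvx]; ring
      · rw [h1 x hx, hux]
      · rw [hgx x hx, hux, hvx]
    · -- Case p ≡ 1/2
      right; right
      have hp12 : ∀ x ∈ I, deriv (deriv f) x = 1/2 := by
        intro x hx; rw [hconst x hx x₀ hx₀]; exact hc
      set k : ℝ := deriv f x₀ - x₀ / 2 with hkdef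
      have hulin : ∀ x ∈ I, deriv f x = x / 2 + k := by
        intro x hx
        have : deriv f x - x / 2 = deriv f x₀ - x₀ / 2 := by
          refine const_of_deriv_zero' I hIopen hIconn (fun y => deriv f y - y / 2)
            (fun y hy => (hud y hy).sub (differentiableAt_fun_id.div_const 2)) ?_ hx hx₀
          intro y hy
          have : HasDerivAt (fun z => deriv f z - z / 2) (deriv (deriv f) y - 1/2) y := by
            have h' := (hud y hy).hasDerivAt
            exact h'.sub ((hasDerivAt_id y).div_const 2)
          rw [this.deriv, hp12 y hy]; ring
        simp only [hkdef]; linarith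
      have hW0 : ∀ x ∈ I, W x = 0 := by
        intro x hx
        have := hpw x hx
        rw [hp12 x hx] at this
        rcases mul_eq_zero.1 this with h | h
        · norm_num at h
        · exact h
      have hvx : ∀ x ∈ I, deriv g x = (x - 2 * deriv f x) * (x - deriv f x) := by
        intro x hx; have := hW0 x hx; simp only [hWdef] at this; linarith
      refine ⟨-3 * k, fun x hx => ?_⟩
      have hux := hulin x hx
      have hvv := hvx x hx
      refine ⟨?_, ?_, ?_⟩
      · rw [hfx x hx, hvv, hux]; ring
      · rw [h1 x hx, hux]; ring
      · rw [hgx x hx, hvv, hux]; ring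
    · -- Case p ≡ 2/3
      right; left
      have hp23 : ∀ x ∈ I, deriv (deriv f) x = 2/3 := by
        intro x hx; rw [hconst x hx x₀ hx₀]; exact hc
      have hW0 : ∀ x ∈ I, W x = 0 := by
        intro x hx
        have := hpw x hx
        rw [hp23 x hx] at this
        rcases mul_eq_zero.1 this with h | h
        · norm_num at h
        · exact h
      have hu23 : ∀ x ∈ I, deriv f x = 2 * x / 3 := by
        intro x hx
        have hWzero : deriv W x = 0 := by
          have : W =ᶠ[nhds x] (fun _ => (0:ℝ)) :=
            Filter.eventuallyEq_of_mem (hI' x hx) fun z hz => hW0 z hz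
          rw [this.deriv_eq, deriv_const]
        have h := hW' x hx
        rw [hWzero, hp23 x hx] at h
        linear_combination -h
      have hvx : ∀ x ∈ I, deriv g x = (x - 2 * deriv f x) * (x - deriv f x) := by
        intro x hx; have := hW0 x hx; simp only [hWdef] at this; linarith
      intro x hx
      have hux := hu23 x hx
      have hvv := hvx x hx
      refine ⟨?_, ?_, ?_⟩
      · rw [hfx x hx, hvv, hux]; ring
      · rw [h1 x hx, hux]; ring
      · rw [hgx x hx, hvv, hux]; ring
  -- two distinct points of I
  obtain ⟨ε, hε, hball⟩ := Metric.isOpen_iff.1 hIopen x₀ hx₀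
  set x₁ := x₀ with hx₁def
  have hx₁ : x₁ ∈ I := hx₀
  have hx₂ : x₁ + ε / 2 ∈ I := by
    apply hball
    simp only [Metric.mem_ball, Real.dist_eq, hx₁def]
    rw [show x₀ + ε / 2 - x₀ = ε / 2 by ring, abs_of_pos (by linarith)]
    linarith
  refine ⟨main, ?_, ?_, ?_⟩
  · rintro ⟨⟨α, γ, hA⟩, hB⟩
    have e1 := (hA x₁ hx₁).2.1
    have e2 := (hB x₁ hx₁).2.1
    have e3 := (hA _ hx₂).2.1
    have e4 := (hB _ hx₂).2.1
    rw [e2] at e1; rw [e4] at e3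
    linarith
  · rintro ⟨⟨α, γ, hA⟩, c, hB⟩
    have e1 := (hA x₁ hx₁).2.1
    have e2 := (hB x₁ hx₁).2.1
    have e3 := (hA _ hx₂).2.1
    have e4 := (hB _ hx₂).2.1
    rw [e2] at e1; rw [e4] at e3
    linarith
  · rintro ⟨hA, c, hB⟩
    have e1 := (hA x₁ hx₁).2.1
    have e2 := (hB x₁ hx₁).2.1
    have e3 := (hA _ hx₂).2.1
    have e4 := (hB _ hx₂).2.1
    rw [e2] at e1; rw [e4] at e3
    linarith
end
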